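/- arXiv:2507.13137 — 4 statements merged into one kernel-verified Lean document; each statement's English description precedes it below -/
import Mathlib

section
/- Suppose v'(x^e(θ̲)) + θ̲ = 0 with x^e(θ̲) ≥ x̲ > 0, and fix δ ∈ [0,1). Then for all θ sufficiently close to θ̲ (specifically whenever δ·[(x^e(θ) − x^e(θ̲)) + x^e(θ̲)]·(θ − θ̲) is dominated appropriately), we have δ·[u(x^e(θ), θ) − u(x^e(θ̲), θ̲)] < (θ − θ̲)·x^e(θ̲) = u(x^e(θ̲), θ) − u(x^e(θ̲), θ̲); i.e., for types close enough to θ̲, the discounted gain from waiting for an efficient allocation is strictly less than the immediate gain from mimicking the lowest type. -/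
/-- for types close enough to the lowest type, the discounted gain
from waiting for an efficient allocation is strictly less than the immediate
gain from mimicking the lowest type. -/
theorem waiting_dominated_near_bottom
    (xbar xlow : ℝ) (hxlow : 0 < xlow)
    (v v' : ℝ → ℝ)
    (hconc : StrictConcaveOn ℝ (Set.Icc 0 xbar) v)
    (hderiv : ∀ z ∈ Set.Icc 0 xbar, HasDerivWithinAt v (v' z) (Set.Icc 0 xbar) z)
    (hderivcont : ContinuousOn v' (Set.Icc 0 xbar))
    (hv0 : v 0 = 0)
    (θlow : ℝ)
    (xe : ℝ → ℝ)
    (hxe_mem : ∀ θ, xe θ ∈ Set.Icc 0 xbar)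
    (hxe_max : ∀ θ, ∀ x' ∈ Set.Icc 0 xbar, v x' + θ * x' ≤ v (xe θ) + θ * xe θ)
    (hxe_cont : Continuous xe) (hxe_mono : Monotone xe)
    (hfoc : v' (xe θlow) + θlow = 0)
    (hxe_low : xlow ≤ xe θlow)
    (δ : ℝ) (hδ : δ ∈ Set.Ico (0 : ℝ) 1) :
    ∃ ε > 0, ∀ θ ∈ Set.Ioc θlow (θlow + ε),
      δ * ((v (xe θ) + θ * xe θ) - (v (xe θlow) + θlow * xe θlow)) <
        (θ - θlow) * xe θlow := by
  obtain ⟨hδ0, hδ1⟩ := hδ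
  have hxe_pos : 0 < xe θlow := lt_of_lt_of_le hxlow hxe_low
  have hlt : δ * xe θlow < xe θlow := by nlinarith
  have hcont : ContinuousAt (fun θ => δ * xe θ) θlow :=
    (continuous_const.mul hxe_cont).continuousAt
  have hev : ∀ᶠ θ in nhds θlow, δ * xe θ < xe θlow :=
    hcont.eventually_lt continuousAt_const hlt
  rw [Metric.eventually_nhds_iff] at hev
  obtain ⟨ε, hε, hball⟩ := hev
  refine ⟨ε / 2, by linarith, ?_⟩
  intro θ ⟨hθ1, hθ2⟩
  have hdist : dist θ θlow < ε := by
    rw [Real.dist_eq, abs_of_pos (by linarith)]; linarith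
  have hkey : δ * xe θ < xe θlow := hball hdist
  have henv : (v (xe θ) + θ * xe θ) - (v (xe θlow) + θlow * xe θlow)
      ≤ (θ - θlow) * xe θ := by
    have := hxe_max θlow (xe θ) (hxe_mem θ)
    nlinarith
  have hθpos : 0 < θ - θlow := by linarith
  nlinarith
end

section
/- Suppose δ ∈ [0,1) and a buyer of type θ finds purchasing allocation x_t at price p_t at time t weakly preferable to any stopping rule τ over future offers (x_τ, p_τ) with x_τ ≤ x_t almost surely: u(x_t, θ) − p_t ≥ E[δ^τ (u(x_τ, θ) − p_τ)]. Then any type θ' > θ strictly prefers to purchase immediately: u(x_t, θ') − p_t > E[δ^τ (u(x_τ, θ') − p_τ)], provided the actual consumption x^a(x_t, θ) > 0. (Skimming property.) -/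
open MeasureTheory

/-!
Let `x^a(x, θ) = min x (xe θ)` be type `θ`'s consumption under the cap `x`; by concavity it
attains `u x θ`. Hence `u xt θ' - u xt θ ≥ (θ' - θ) x^a(xt, θ) > 0`. On the other hand
`u · θ' - u · θ` is nonnegative and nondecreasing in the cap, so on the future offers
`x_τ ≤ xt` it is at most that gap `G`. As `τ > t`, discounting leaves at most `δ G < G`
of the gain to the deviation, so `θ'` loses strictly more by waiting than `θ` does.
-/

open Set

/-- Below a maximiser `c` a concave function is nondecreasing, so capping the domain at `x`
moves the maximiser to `min x c`. -/
theorem ConcaveOn.isMaxOn_Icc_min {𝕜 β : Type*} [Field 𝕜] [LinearOrder 𝕜]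
    [IsStrictOrderedRing 𝕜] [AddCommGroup β] [LinearOrder β] [IsOrderedAddMonoid β]
    [Module 𝕜 β] [IsStrictOrderedModule 𝕜 β] {f : 𝕜 → β} {a b c x : 𝕜}
    (hf : ConcaveOn 𝕜 (Icc a b) f) (hc : c ∈ Icc a b) (hmax : IsMaxOn f (Icc a b) c)
    (hx : x ∈ Icc a b) : IsMaxOn f (Icc a x) (min x c) := by
  intro y hy
  have hy' : y ∈ Icc a b := ⟨hy.1, hy.2.trans hx.2⟩
  rcases le_total x c with hxc | hcx
  · rw [min_eq_left hxc]
    have hfyc : f y ≤ f c := hmax hy'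
    simpa [min_eq_left hfyc] using hf.min_le_of_mem_Icc hy' hc ⟨hy.2, hxc⟩
  · rw [min_eq_right hcx]
    exact hmax hy'

section CappedMaximum

variable {g : ℝ → ℝ} {x y θ θ' U U' V V' : ℝ}

theorem le_of_isGreatest_capped (hθ : θ ≤ θ')
    (hU : IsGreatest ((fun a => g a + θ * a) '' Icc 0 x) U)
    (hU' : IsGreatest ((fun a => g a + θ' * a) '' Icc 0 x) U') : U ≤ U' := by
  obtain ⟨b, hb, rfl⟩ := hU.1
  have hb' : g b + θ' * b ≤ U' := hU'.2 (mem_image_of_mem _ hb)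
  nlinarith [hb.1]

/-- Increasing differences of the capped maximum in the cap and the type. -/
theorem sub_le_sub_of_isGreatest_capped (hxy : x ≤ y) (hθ : θ ≤ θ')
    (hU : IsGreatest ((fun a => g a + θ * a) '' Icc 0 x) U)
    (hU' : IsGreatest ((fun a => g a + θ' * a) '' Icc 0 x) U')
    (hV : IsGreatest ((fun a => g a + θ * a) '' Icc 0 y) V)
    (hV' : IsGreatest ((fun a => g a + θ' * a) '' Icc 0 y) V') : U' - U ≤ V' - V := by
  obtain ⟨a, ha, rfl⟩ := hU'.1
  obtain ⟨b, hb, rfl⟩ := hV.1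
  rcases le_total a b with hab | hba
  · have hbV' : g b + θ' * b ≤ V' := hV'.2 (mem_image_of_mem _ hb)
    have haU : g a + θ * a ≤ U := hU.2 (mem_image_of_mem _ ha)
    nlinarith
  · have haV' : g a + θ' * a ≤ V' := hV'.2 (mem_image_of_mem _ ⟨ha.1, ha.2.trans hxy⟩)
    have hbU : g b + θ * b ≤ U := hU.2 (mem_image_of_mem _ ⟨hb.1, hba.trans ha.2⟩)
    linarith

end CappedMaximum

theorem integral_pow_mul_le_of_mem_Icc {Ω : Type*} [MeasurableSpace Ω] {μ : Measure Ω}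
    [IsProbabilityMeasure μ] {δ G : ℝ} (hδ0 : 0 ≤ δ) (hδ1 : δ ≤ 1) {k : Ω → ℕ}
    (hk : ∀ ω, k ω ≠ 0) {D : Ω → ℝ} (hD : ∀ᵐ ω ∂μ, D ω ∈ Icc 0 G) :
    ∫ ω, δ ^ k ω * D ω ∂μ ≤ δ * G := by
  have hbound : (fun ω => δ ^ k ω * D ω) ≤ᵐ[μ] fun _ => δ * G := by
    filter_upwards [hD] with ω hω
    exact mul_le_mul (pow_le_of_le_one hδ0 hδ1 (hk ω)) hω.2 hω.1 hδ0
  have hnonneg : 0 ≤ᵐ[μ] fun ω => δ ^ k ω * D ω := by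
    filter_upwards [hD] with ω hω
    exact mul_nonneg (pow_nonneg hδ0 _) hω.1
  simpa using integral_mono_of_nonneg hnonneg (integrable_const _) hbound

theorem skimming_property_general
    (xbar : ℝ)
    (v : ℝ → ℝ)
    (hconc : StrictConcaveOn ℝ (Set.Icc 0 xbar) v)
    (u : ℝ → ℝ → ℝ)
    (hu : ∀ x ∈ Set.Ioc 0 xbar, ∀ θ : ℝ,
      IsGreatest ((fun x' => v x' + θ * x') '' Set.Icc 0 x) (u x θ))
    (xe : ℝ → ℝ)
    (hxe_mem : ∀ θ, xe θ ∈ Set.Icc 0 xbar)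
    (hxe_max : ∀ θ, ∀ x' ∈ Set.Icc 0 xbar, v x' + θ * x' ≤ v (xe θ) + θ * xe θ)
    (δ : ℝ) (hδ : δ ∈ Set.Ico (0 : ℝ) 1)
    (Ω : Type*) [MeasurableSpace Ω] (μ : Measure Ω) [IsProbabilityMeasure μ]
    (t : ℕ) (τ : Ω → ℕ) (hτ : ∀ ω, t + 1 ≤ τ ω)
    (xt pt : ℝ) (hxt : xt ∈ Set.Ioc 0 xbar)
    (X P : Ω → ℝ)
    (hX : ∀ᵐ ω ∂μ, X ω ∈ Set.Ioc 0 xt)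
    (hint : ∀ θ' : ℝ,
      Integrable (fun ω => δ ^ (τ ω - t) * (u (X ω) θ' - P ω)) μ)
    (θ θ' : ℝ) (hθ : θ < θ')
    (hpos : 0 < min xt (xe θ))
    (hpref : u xt θ - pt ≥ ∫ ω, δ ^ (τ ω - t) * (u (X ω) θ - P ω) ∂μ) :
    u xt θ' - pt > ∫ ω, δ ^ (τ ω - t) * (u (X ω) θ' - P ω) ∂μ := by
  set m := min xt (xe θ)
  have hm : m ∈ Icc 0 xt := ⟨hpos.le, min_le_left _ _⟩
  have hm_max : IsMaxOn (fun a => v a + θ * a) (Icc 0 xt) m :=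
    (hconc.concaveOn.add ((LinearMap.mul ℝ ℝ θ).concaveOn (convex_Icc 0 xbar))).isMaxOn_Icc_min
      (hxe_mem θ) (hxe_max θ) ⟨hxt.1.le, hxt.2⟩
  have hm_eq : v m + θ * m = u xt θ := by
    refine le_antisymm ((hu xt hxt θ).2 (mem_image_of_mem _ hm)) ?_
    obtain ⟨b, hb, hbu⟩ := (hu xt hxt θ).1
    exact hbu ▸ hm_max hb
  have hm_le : v m + θ' * m ≤ u xt θ' := (hu xt hxt θ').2 (mem_image_of_mem _ hm)
  set G := u xt θ' - u xt θ
  have hG : 0 < G := by nlinarith [mul_pos (sub_pos.2 hθ) hpos]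
  have hgain : ∀ᵐ ω ∂μ, u (X ω) θ' - u (X ω) θ ∈ Icc 0 G := by
    filter_upwards [hX] with ω hω
    have hωbar : X ω ∈ Ioc 0 xbar := ⟨hω.1, hω.2.trans hxt.2⟩
    exact ⟨sub_nonneg.2 (le_of_isGreatest_capped hθ.le (hu _ hωbar θ) (hu _ hωbar θ')),
      sub_le_sub_of_isGreatest_capped hω.2 hθ.le (hu _ hωbar θ) (hu _ hωbar θ')
        (hu xt hxt θ) (hu xt hxt θ')⟩
  have hdisc := integral_pow_mul_le_of_mem_Icc hδ.1 hδ.2.le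
    (k := fun ω => τ ω - t) (fun ω => by have := hτ ω; omega) hgain
  have hsplit : ∫ ω, δ ^ (τ ω - t) * (u (X ω) θ' - u (X ω) θ) ∂μ
      = (∫ ω, δ ^ (τ ω - t) * (u (X ω) θ' - P ω) ∂μ)
        - ∫ ω, δ ^ (τ ω - t) * (u (X ω) θ - P ω) ∂μ := by
    rw [← integral_sub (hint θ') (hint θ)]
    congr 1 with ω
    ring
  have hδG : δ * G < G := mul_lt_of_lt_one_left hG hδ.2
  linarith

/-- Skimming property: if type `θ` weakly prefers buying
`(x_t, p_t)` now to any (random) future offer `(x_τ, p_τ)` with `x_τ ≤ x_t`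
discounted by `δ^τ`, and `θ`'s actual consumption at `x_t` is positive, then
every higher type `θ' > θ` strictly prefers to buy now. -/
theorem skimming_property
    (xbar : ℝ) (hxbar : 0 < xbar)
    (v : ℝ → ℝ)
    (hconc : StrictConcaveOn ℝ (Set.Icc 0 xbar) v)
    (hcont : ContinuousOn v (Set.Icc 0 xbar))
    (hv0 : v 0 = 0)
    (u : ℝ → ℝ → ℝ)
    (hu : ∀ x ∈ Set.Ioc 0 xbar, ∀ θ : ℝ,
      IsGreatest ((fun x' => v x' + θ * x') '' Set.Icc 0 x) (u x θ))
    (xe : ℝ → ℝ)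
    (hxe_mem : ∀ θ, xe θ ∈ Set.Icc 0 xbar)
    (hxe_max : ∀ θ, ∀ x' ∈ Set.Icc 0 xbar, v x' + θ * x' ≤ v (xe θ) + θ * xe θ)
    (δ : ℝ) (hδ : δ ∈ Set.Ico (0 : ℝ) 1)
    (Ω : Type*) [MeasurableSpace Ω] (μ : Measure Ω) [IsProbabilityMeasure μ]
    (t : ℕ) (τ : Ω → ℕ) (hτ : ∀ ω, t + 1 ≤ τ ω)
    (xt pt : ℝ) (hxt : xt ∈ Set.Ioc 0 xbar)
    (X P : Ω → ℝ)
    (hX : ∀ᵐ ω ∂μ, X ω ∈ Set.Ioc 0 xt)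
    (hint : ∀ θ' : ℝ,
      Integrable (fun ω => δ ^ (τ ω - t) * (u (X ω) θ' - P ω)) μ)
    (θ θ' : ℝ) (hθ : θ < θ')
    (hpos : 0 < min xt (xe θ))
    (hpref : u xt θ - pt ≥ ∫ ω, δ ^ (τ ω - t) * (u (X ω) θ - P ω) ∂μ) :
    u xt θ' - pt > ∫ ω, δ ^ (τ ω - t) * (u (X ω) θ' - P ω) ∂μ :=
  skimming_property_general xbar v hconc u hu xe hxe_mem hxe_max δ hδ Ω μ t τ hτ xt pt hxt X P hX
    hint θ θ' hθ hpos hpref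
end

section
/- Under incentive compatibility and individual rationality with U(θ̲) = 0, the seller's expected revenue equals the expected discounted virtual surplus: ∫ p(θ) dF(θ) = ∫ q(θ)·[E[v(x^a(x(θ),θ))] + E[x^a(x(θ),θ)]·(θ − (1−F(θ))/f(θ))]·f(θ) dθ. -/
/-- Myerson's lemma with free disposal: with `U(θ̲) = 0`,
expected revenue equals expected virtual surplus. Here `Ev θ = E[v(x^a(x(θ),θ))]`
and `Exa θ = E[x^a(x(θ),θ)]`, so that `E[u(x(θ),θ)] = Ev θ + θ·Exa θ`. -/
theorem revenue_equals_virtual_surplus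
    (θlow θhigh : ℝ) (hθ : θlow < θhigh)
    (F f : ℝ → ℝ) (m M : ℝ) (hm : 0 < m)
    (hf_cont : ContinuousOn f (Set.Icc θlow θhigh))
    (hf_bdd : ∀ θ ∈ Set.Icc θlow θhigh, m ≤ f θ ∧ f θ ≤ M)
    (hF : ∀ θ ∈ Set.Icc θlow θhigh, F θ = ∫ z in θlow..θ, f z)
    (hF1 : F θhigh = 1)
    (q Ev Exa p : ℝ → ℝ)
    (hq : ∀ θ, q θ ∈ Set.Icc (0 : ℝ) 1)
    (hq_cont : ContinuousOn q (Set.Icc θlow θhigh))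
    (hEv_cont : ContinuousOn Ev (Set.Icc θlow θhigh))
    (hExa_cont : ContinuousOn Exa (Set.Icc θlow θhigh))
    (hp : ∀ θ ∈ Set.Icc θlow θhigh,
      p θ = q θ * (Ev θ + θ * Exa θ) - ∫ z in θlow..θ, q z * Exa z) :
    ∫ θ in θlow..θhigh, p θ * f θ =
      ∫ θ in θlow..θhigh,
        q θ * (Ev θ + Exa θ * (θ - (1 - F θ) / f θ)) * f θ := by
  have hle : θlow ≤ θhigh := hθ.le
  have huIcc : Set.uIcc θlow θhigh = Set.Icc θlow θhigh := Set.uIcc_of_le hle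
  set g : ℝ → ℝ := fun z => q z * Exa z with hg_def
  set G : ℝ → ℝ := fun x => ∫ z in θlow..x, g z with hG_def
  have hg_cont : ContinuousOn g (Set.Icc θlow θhigh) := hq_cont.mul hExa_cont
  have hg_int : IntervalIntegrable g MeasureTheory.volume θlow θhigh :=
    (huIcc ▸ hg_cont : ContinuousOn g (Set.uIcc θlow θhigh)).intervalIntegrable
  have hf_int : IntervalIntegrable f MeasureTheory.volume θlow θhigh :=
    (huIcc ▸ hf_cont : ContinuousOn f (Set.uIcc θlow θhigh)).intervalIntegrable
  -- continuity of G and F on Icc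
  have hG_cont : ContinuousOn G (Set.Icc θlow θhigh) := by
    have := intervalIntegral.continuousOn_primitive_interval
      (f := g) (μ := MeasureTheory.volume) (a := θlow) (b := θhigh)
      (by rw [huIcc]; exact hg_cont.integrableOn_compact isCompact_Icc)
    rwa [huIcc] at this
  have hFprim_cont : ContinuousOn (fun x => ∫ z in θlow..x, f z) (Set.Icc θlow θhigh) := by
    have := intervalIntegral.continuousOn_primitive_interval
      (f := f) (μ := MeasureTheory.volume) (a := θlow) (b := θhigh)
      (by rw [huIcc]; exact hf_cont.integrableOn_compact isCompact_Icc)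
    rwa [huIcc] at this
  have hF_cont : ContinuousOn F (Set.Icc θlow θhigh) := by
    apply hFprim_cont.congr
    intro x hx; exact hF x hx
  -- derivatives on the interior
  have hmemIoo : ∀ x ∈ Set.Ioo θlow θhigh, Set.Icc θlow θhigh ∈ nhds x := fun x hx =>
    Filter.mem_of_superset (Ioo_mem_nhds hx.1 hx.2) Set.Ioo_subset_Icc_self
  have hG_deriv : ∀ x ∈ Set.Ioo (min θlow θhigh) (max θlow θhigh),
      HasDerivWithinAt G (g x) (Set.Ioi x) x := by
    rw [min_eq_left hle, max_eq_right hle]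
    intro x hx
    have hgi : IntervalIntegrable g MeasureTheory.volume θlow x :=
      hg_int.mono_set (by
        rw [huIcc, Set.uIcc_of_le hx.1.le]
        exact Set.Icc_subset_Icc le_rfl hx.2.le)
    have hca : ContinuousAt g x := hg_cont.continuousAt (hmemIoo x hx)
    exact (intervalIntegral.integral_hasDerivAt_right hgi
      ⟨Set.Icc θlow θhigh, hmemIoo x hx, hg_cont.aestronglyMeasurable measurableSet_Icc⟩ hca).hasDerivWithinAt
  have hF_deriv : ∀ x ∈ Set.Ioo (min θlow θhigh) (max θlow θhigh),
      HasDerivWithinAt F (f x) (Set.Ioi x) x := by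
    rw [min_eq_left hle, max_eq_right hle]
    intro x hx
    have hfi : IntervalIntegrable f MeasureTheory.volume θlow x :=
      hf_int.mono_set (by
        rw [huIcc, Set.uIcc_of_le hx.1.le]
        exact Set.Icc_subset_Icc le_rfl hx.2.le)
    have hca : ContinuousAt f x := hf_cont.continuousAt (hmemIoo x hx)
    have hd : HasDerivAt (fun u => ∫ z in θlow..u, f z) (f x) x :=
      intervalIntegral.integral_hasDerivAt_right hfi
        ⟨Set.Icc θlow θhigh, hmemIoo x hx, hf_cont.aestronglyMeasurable measurableSet_Icc⟩ hca
    have heq : F =ᶠ[nhds x] fun u => ∫ z in θlow..u, f z :=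
      Filter.eventuallyEq_of_mem (hmemIoo x hx) (fun y hy => hF y hy)
    exact (hd.congr_of_eventuallyEq heq).hasDerivWithinAt
  -- integration by parts: ∫ G f = G θhigh - ∫ g F
  have hparts : ∫ x in θlow..θhigh, G x * f x
      = G θhigh * F θhigh - G θlow * F θlow - ∫ x in θlow..θhigh, g x * F x := by
    exact intervalIntegral.integral_mul_deriv_eq_deriv_mul_of_hasDeriv_right
      (huIcc ▸ hG_cont) (huIcc ▸ hF_cont) hG_deriv hF_deriv hg_int hf_int
  have hGlow : G θlow = 0 := intervalIntegral.integral_same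
  have hparts' : ∫ x in θlow..θhigh, G x * f x
      = G θhigh - ∫ x in θlow..θhigh, g x * F x := by
    rw [hparts, hGlow, hF1]; ring
  -- integrability pieces
  have hgF_int : IntervalIntegrable (fun x => g x * F x) MeasureTheory.volume θlow θhigh :=
    ((huIcc ▸ (hg_cont.mul hF_cont)) : ContinuousOn _ (Set.uIcc θlow θhigh)).intervalIntegrable
  have hGf_int : IntervalIntegrable (fun x => G x * f x) MeasureTheory.volume θlow θhigh :=
    ((huIcc ▸ (hG_cont.mul hf_cont)) : ContinuousOn _ (Set.uIcc θlow θhigh)).intervalIntegrable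
  have hA_cont : ContinuousOn (fun x => q x * (Ev x + x * Exa x) * f x) (Set.Icc θlow θhigh) :=
    ((hq_cont.mul (hEv_cont.add ((continuousOn_id).mul hExa_cont))).mul hf_cont)
  have hA_int : IntervalIntegrable (fun x => q x * (Ev x + x * Exa x) * f x)
      MeasureTheory.volume θlow θhigh :=
    ((huIcc ▸ hA_cont) : ContinuousOn _ (Set.uIcc θlow θhigh)).intervalIntegrable
  -- rewrite LHS
  have hLHS : ∫ θ in θlow..θhigh, p θ * f θ
      = (∫ θ in θlow..θhigh, q θ * (Ev θ + θ * Exa θ) * f θ)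
        - ∫ θ in θlow..θhigh, G θ * f θ := by
    rw [← intervalIntegral.integral_sub hA_int hGf_int]
    apply intervalIntegral.integral_congr
    intro x hx
    rw [huIcc] at hx
    simp only []
    rw [hp x hx]; ring
  -- rewrite RHS
  have hRHS : ∫ θ in θlow..θhigh, q θ * (Ev θ + Exa θ * (θ - (1 - F θ) / f θ)) * f θ
      = (∫ θ in θlow..θhigh, q θ * (Ev θ + θ * Exa θ) * f θ)
        - ∫ θ in θlow..θhigh, g θ * (1 - F θ) := by
    have h1F_int : IntervalIntegrable (fun x => g x * (1 - F x)) MeasureTheory.volume θlow θhigh :=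
      ((huIcc ▸ (hg_cont.mul (continuousOn_const.sub hF_cont))) :
        ContinuousOn _ (Set.uIcc θlow θhigh)).intervalIntegrable
    rw [← intervalIntegral.integral_sub hA_int h1F_int]
    apply intervalIntegral.integral_congr
    intro x hx
    rw [huIcc] at hx
    have hfx : f x ≠ 0 := ne_of_gt (lt_of_lt_of_le hm (hf_bdd x hx).1)
    field_simp
    ring
  -- ∫ g (1-F) = G θhigh - ∫ g F = ∫ G f
  have hkey : ∫ θ in θlow..θhigh, g θ * (1 - F θ) = ∫ θ in θlow..θhigh, G θ * f θ := by
    rw [hparts']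
    have : ∫ θ in θlow..θhigh, g θ * (1 - F θ)
        = (∫ θ in θlow..θhigh, g θ) - ∫ θ in θlow..θhigh, g θ * F θ := by
      rw [← intervalIntegral.integral_sub hg_int hgF_int]
      apply intervalIntegral.integral_congr
      intro x _; ring
    rw [this]
  rw [hLHS, hRHS, hkey]
end

section
/- Fix an interval [θ*, θ̄] partitioned into n equal segments with endpoints θ_i = θ̄ − i(θ̄ − θ*)/n, allocations x_i (i = 1..n) and prices defined recursively by u(x_i, θ_i) − p_i = δ·[u(x_{i+1}, θ_i) − p_{i+1}] with p_n fixed. Then the seller's revenue Σ_{i=1}^n δ^{i−1}(F(θ_{i−1}) − F(θ_i))·p_i equals ∫ δ^{t(θ)}·[v(x^a(x_n(θ),θ)) + x^a(x_n(θ),θ)·(θ − (1−F(θ))/f(θ))]·f(θ) dθ, where x_n(θ) = x_i and t(θ) = i−1 for θ ∈ [θ_i, θ_{i−1}], provided p_n equals type θ_n's full surplus minus its information rent (i.e., the boundary IR binds and local downward IC binds at each cutoff). -/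
/-!
For a fixed allocation `c`, the surplus `θ ↦ u c θ` is the upper envelope of the affine functions
`θ ↦ v y + θ y`, `y ≤ c`, touched at `y = min c (xe θ)`. So it is convex with derivative
`min c (xe θ)` off the countably many jumps of that monotone function, and integrating by parts
against `1 - F` turns the virtual surplus on the `i`-th cutoff interval into the boundary terms
`δ^(i-1) (u(x_i, θ_i)(1 - F θ_i) - u(x_i, θ_{i-1})(1 - F θ_{i-1}))`. On the discrete side, Abel
summation with the cutoff indifference conditions produces the same boundary terms; the end terms
vanish because `F θ̄ = 1` and the lowest cutoff type's participation constraint binds.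
-/

open Set MeasureTheory Topology

def IsSubgradientField (g U : ℝ → ℝ) : Prop :=
  ∀ s t, U s + (t - s) * g s ≤ U t

namespace IsSubgradientField

variable {g U : ℝ → ℝ}

theorem monotone (h : IsSubgradientField g U) : Monotone g := by
  intro s t hst
  rcases hst.eq_or_lt with rfl | hlt
  · exact le_rfl
  have := h s t
  have := h t s
  nlinarith

theorem convexOn (h : IsSubgradientField g U) : ConvexOn ℝ univ U := by
  refine ⟨convex_univ, fun x _ y _ a b ha hb hab => ?_⟩
  set z := a • x + b • y
  have hx := mul_le_mul_of_nonneg_left (h z x) ha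
  have hy := mul_le_mul_of_nonneg_left (h z y) hb
  simp only [smul_eq_mul, z] at *
  linear_combination hx + hy - (U (a * x + b * y) - g (a * x + b * y) * (a * x + b * y)) * hab

theorem continuous (h : IsSubgradientField g U) : Continuous U :=
  continuousOn_univ.1 (h.convexOn.continuousOn isOpen_univ)

theorem hasDerivAt {s : ℝ} (h : IsSubgradientField g U) (hg : ContinuousAt g s) :
    HasDerivAt U (g s) s := by
  rw [hasDerivAt_iff_isLittleO, Asymptotics.isLittleO_iff]
  intro c hc
  filter_upwards [Metric.tendsto_nhds.1 hg c hc] with t ht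
  rw [Real.dist_eq] at ht
  have hlow := h s t
  have hupp := h t s
  simp only [smul_eq_mul, Real.norm_eq_abs]
  calc |U t - U s - (t - s) * g s| ≤ |(t - s) * (g t - g s)| := by
        rw [abs_of_nonneg (by linarith)]
        exact le_trans (by linarith) (le_abs_self _)
    _ ≤ c * |t - s| := by rw [abs_mul, mul_comm c]; gcongr

variable {a b : ℝ} {K K' : ℝ → ℝ}

theorem intervalIntegrable_mul_add_mul (h : IsSubgradientField g U) (hab : a ≤ b)
    (hKc : ContinuousOn K (Icc a b)) (hK' : IntervalIntegrable K' volume a b) :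
    IntervalIntegrable (fun x => g x * K x + U x * K' x) volume a b :=
  (h.monotone.intervalIntegrable.mul_continuousOn (by rwa [uIcc_of_le hab])).add
    (hK'.continuousOn_mul h.continuous.continuousOn)

/-- `U` is differentiable with derivative `g` off the countably many jumps of the monotone `g`. -/
theorem integral_mul_add_mul_eq (h : IsSubgradientField g U) (hab : a ≤ b)
    (hKc : ContinuousOn K (Icc a b)) (hK : ∀ x ∈ Ioo a b, HasDerivAt K (K' x) x)
    (hK' : IntervalIntegrable K' volume a b) :
    ∫ x in a..b, (g x * K x + U x * K' x) = U b * K b - U a * K a :=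
  integral_eq_of_hasDerivAt_off_countable_of_le (fun x => U x * K x) _ hab
    h.monotone.countable_not_continuousAt (h.continuous.continuousOn.mul hKc)
    (fun x hx => (h.hasDerivAt (not_not.1 hx.2)).mul (hK x hx.1))
    (h.intervalIntegrable_mul_add_mul hab hKc hK')

end IsSubgradientField

theorem ConcaveOn.isMaxOn_Icc_min_s19 {φ : ℝ → ℝ} {a b c e : ℝ} (hφ : ConcaveOn ℝ (Icc a b) φ)
    (he : IsMaxOn φ (Icc a b) e) (he_mem : e ∈ Icc a b) (hc : c ∈ Icc a b) :
    IsMaxOn φ (Icc a c) (min c e) := by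
  intro y hy
  have hy' : y ∈ Icc a b := ⟨hy.1, hy.2.trans hc.2⟩
  rcases le_total e c with hec | hce
  · rw [min_eq_right hec]
    exact he hy'
  · rw [min_eq_left hce]
    exact (le_min le_rfl (he hy')).trans (hφ.min_le_of_mem_Icc hy' he_mem ⟨hy.2, hce⟩)

section Envelope

variable {v xe U : ℝ → ℝ} {xbar c : ℝ}

theorem isSubgradientField_cappedAllocation (hv : ConcaveOn ℝ (Icc 0 xbar) v)
    (hxe_mem : ∀ θ, xe θ ∈ Icc 0 xbar)
    (hxe_max : ∀ θ, ∀ x' ∈ Icc 0 xbar, v x' + θ * x' ≤ v (xe θ) + θ * xe θ)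
    (hc : c ∈ Icc 0 xbar) (hU : ∀ θ, U θ = v (min c (xe θ)) + θ * min c (xe θ)) :
    IsSubgradientField (fun θ => min c (xe θ)) U := by
  intro s t
  have hmax := (hv.add ((LinearMap.mul ℝ ℝ t).concaveOn (convex_Icc 0 xbar))).isMaxOn_Icc_min_s19
    (hxe_max t) (hxe_mem t) hc
  have hs : min c (xe s) ∈ Icc 0 c := ⟨le_min hc.1 (hxe_mem s).1, min_le_left _ _⟩
  have := hmax hs
  simp only [mem_ofPred_eq, Pi.add_apply, LinearMap.mul_apply'] at this
  rw [hU, hU]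
  linarith

theorem integral_step_virtualSurplus_eq {F f xs : ℝ → ℝ} {t : ℝ → ℕ} {δ a b : ℝ} {k : ℕ}
    (hv : ConcaveOn ℝ (Icc 0 xbar) v) (hxe_mem : ∀ θ, xe θ ∈ Icc 0 xbar)
    (hxe_max : ∀ θ, ∀ x' ∈ Icc 0 xbar, v x' + θ * x' ≤ v (xe θ) + θ * xe θ)
    (hc : c ∈ Icc 0 xbar) (hU : ∀ θ, U θ = v (min c (xe θ)) + θ * min c (xe θ))
    (hab : a ≤ b) (hFc : ContinuousOn F (Icc a b)) (hF : ∀ θ ∈ Ioo a b, HasDerivAt F (f θ) θ)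
    (hf : IntervalIntegrable f volume a b) (hf0 : ∀ θ ∈ Ioo a b, f θ ≠ 0)
    (hstep : ∀ θ ∈ Ioo a b, xs θ = c ∧ t θ = k) :
    IntervalIntegrable (fun θ => δ ^ t θ *
      (v (min (xs θ) (xe θ)) + min (xs θ) (xe θ) * (θ - (1 - F θ) / f θ)) * f θ) volume a b ∧
    ∫ θ in a..b, δ ^ t θ *
      (v (min (xs θ) (xe θ)) + min (xs θ) (xe θ) * (θ - (1 - F θ) / f θ)) * f θ =
      δ ^ k * (U a * (1 - F a) - U b * (1 - F b)) := by
  have hsub := isSubgradientField_cappedAllocation hv hxe_mem hxe_max hc hU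
  have hK : ∀ θ ∈ Ioo a b, HasDerivAt (fun θ => 1 - F θ) (-f θ) θ :=
    fun θ hθ => (hF θ hθ).const_sub 1
  have hKc : ContinuousOn (fun θ => 1 - F θ) (Icc a b) := continuousOn_const.sub hFc
  -- the virtual-surplus integrand is `-(g K + U K')` for `K = 1 - F`
  have heq : EqOn (fun θ => δ ^ t θ *
      (v (min (xs θ) (xe θ)) + min (xs θ) (xe θ) * (θ - (1 - F θ) / f θ)) * f θ)
      (fun θ => δ ^ k * -(min c (xe θ) * (1 - F θ) + U θ * -f θ)) (Ioo a b) := by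
    intro θ hθ
    obtain ⟨hxs, ht⟩ := hstep θ hθ
    simp only [hxs, ht, hU]
    field_simp [hf0 θ hθ]
    ring
  refine ⟨?_, ?_⟩
  · have hint := ((hsub.intervalIntegrable_mul_add_mul hab hKc hf.neg).neg).const_mul (δ ^ k)
    exact hint.congr_uIoo (by rw [uIoo_of_le hab]; exact heq.symm)
  · rw [intervalIntegral.integral_congr_Ioo_of_le hab heq, intervalIntegral.integral_const_mul,
      intervalIntegral.integral_neg, hsub.integral_mul_add_mul_eq hab hKc hK hf.neg]
    ring

end Envelope

theorem continuousOn_of_eqOn_primitive {F f : ℝ → ℝ} {a b : ℝ}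
    (hf : ContinuousOn f (Icc a b)) (hF : EqOn F (fun θ => ∫ z in a..θ, f z) (Icc a b)) :
    ContinuousOn F (Icc a b) := by
  rcases le_total a b with hab | hba
  · have := intervalIntegral.continuousOn_primitive_interval (μ := volume) (a := a) (b := b)
      (by rw [uIcc_of_le hab]; exact hf.integrableOn_Icc)
    rw [uIcc_of_le hab] at this
    exact this.congr hF
  · exact (subsingleton_Icc_of_ge hba).continuousOn F

theorem hasDerivAt_of_eqOn_primitive {F f : ℝ → ℝ} {a b θ : ℝ}
    (hf : ContinuousOn f (Icc a b)) (hF : EqOn F (fun θ => ∫ z in a..θ, f z) (Icc a b))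
    (hθ : θ ∈ Ioo a b) : HasDerivAt F (f θ) θ := by
  have hnhds : Icc a b ∈ 𝓝 θ := Icc_mem_nhds hθ.1 hθ.2
  refine (intervalIntegral.integral_hasDerivAt_right
    ((hf.mono (Icc_subset_Icc_right hθ.2.le)).intervalIntegrable_of_Icc hθ.1.le)
    ((hf.mono Ioo_subset_Icc_self).stronglyMeasurableAtFilter isOpen_Ioo θ hθ)
    (hf.continuousAt hnhds)).congr_of_eventuallyEq ?_
  filter_upwards [hnhds] using hF

theorem sum_integral_adjacent_intervals_Icc_pred {E : Type*} [NormedAddCommGroup E]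
    [NormedSpace ℝ E] {f : ℝ → E} {μ : Measure ℝ} {a : ℕ → ℝ} {n : ℕ}
    (hint : ∀ i ∈ Finset.Icc 1 n, IntervalIntegrable f μ (a i) (a (i - 1))) :
    ∑ i ∈ Finset.Icc 1 n, ∫ x in a i..a (i - 1), f x ∂μ = ∫ x in a n..a 0, f x ∂μ := by
  suffices h : IntervalIntegrable f μ (a n) (a 0) ∧
      ∑ i ∈ Finset.Icc 1 n, ∫ x in a i..a (i - 1), f x ∂μ = ∫ x in a n..a 0, f x ∂μ from h.2
  induction n with
  | zero => simp
  | succ n ih =>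
    obtain ⟨hint₀, hsum⟩ := ih fun i hi => hint i (by simp at hi ⊢; omega)
    have hlast : IntervalIntegrable f μ (a (n + 1)) (a n) := hint (n + 1) (by simp)
    refine ⟨hlast.trans hint₀, ?_⟩
    rw [Finset.sum_Icc_succ_top (by omega), hsum, Nat.add_sub_cancel, add_comm,
      intervalIntegral.integral_add_adjacent_intervals hlast hint₀]

theorem Finset.sum_Icc_sub_pred {M : Type*} [AddCommGroup M] (h : ℕ → M) (n : ℕ) :
    ∑ i ∈ Finset.Icc 1 n, (h i - h (i - 1)) = h n - h 0 := by
  induction n with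
  | zero => simp
  | succ n ih => rw [Finset.sum_Icc_succ_top (by omega), ih, Nat.add_sub_cancel]; abel

theorem sum_revenue_eq_sum_boundary {δ : ℝ} {n : ℕ} {Fs p a b : ℕ → ℝ} (hF0 : Fs 0 = 1)
    (hrec : ∀ i, 1 ≤ i → i < n → a i - p i = δ * (b (i + 1) - p (i + 1))) (hpn : p n = a n) :
    ∑ i ∈ Finset.Icc 1 n, δ ^ (i - 1) * (Fs (i - 1) - Fs i) * p i =
      ∑ i ∈ Finset.Icc 1 n, δ ^ (i - 1) * (a i * (1 - Fs i) - b i * (1 - Fs (i - 1))) := by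
  set h : ℕ → ℝ := fun j => (1 - Fs j) * (δ ^ (j - 1) * (p j - a j))
  have hterm : ∀ i ∈ Finset.Icc 1 n, δ ^ (i - 1) * (Fs (i - 1) - Fs i) * p i -
      δ ^ (i - 1) * (a i * (1 - Fs i) - b i * (1 - Fs (i - 1))) = h i - h (i - 1) := by
    intro i hi
    obtain ⟨hi1, hin⟩ := Finset.mem_Icc.1 hi
    obtain ⟨j, rfl⟩ : ∃ j, i = j + 1 := ⟨i - 1, by omega⟩
    rcases Nat.eq_zero_or_pos j with rfl | hj
    · simp only [h, hF0, zero_add]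
      ring
    · have hpow : δ ^ j = δ ^ (j - 1) * δ := by rw [← pow_succ, Nat.sub_add_cancel hj]
      simp only [h, Nat.add_sub_cancel, hpow]
      linear_combination -(1 - Fs j) * δ ^ (j - 1) * hrec j hj (by omega)
  rw [← sub_eq_zero, ← Finset.sum_sub_distrib, Finset.sum_congr rfl hterm,
    Finset.sum_Icc_sub_pred]
  simp [h, hF0, hpn]

theorem uniformGrid_bounds {a b : ℝ} (hab : a ≤ b) {n i : ℕ} (hi : i ∈ Finset.Icc 1 n) :
    a ≤ b - i * (b - a) / n ∧ b - i * (b - a) / n ≤ b - (i - 1 : ℕ) * (b - a) / n ∧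
      b - (i - 1 : ℕ) * (b - a) / n ≤ b := by
  obtain ⟨hi1, hin⟩ := Finset.mem_Icc.1 hi
  have hn : (0 : ℝ) < n := by exact_mod_cast hi1.trans hin
  have hin' : (i : ℝ) ≤ n := by exact_mod_cast hin
  have hi1' : (1 : ℝ) ≤ i := by exact_mod_cast hi1
  rw [Nat.cast_sub hi1, Nat.cast_one]
  refine ⟨?_, ?_, ?_⟩
  · rw [le_sub_comm, div_le_iff₀ hn]
    nlinarith
  · gcongr
    linarith
  · have : 0 ≤ ((i : ℝ) - 1) * (b - a) / n :=
      div_nonneg (mul_nonneg (by linarith) (by linarith)) hn.le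
    linarith

theorem discrete_revenue_identity_general
    (xbar : ℝ)
    (v : ℝ → ℝ)
    (hconc : StrictConcaveOn ℝ (Set.Icc 0 xbar) v)
    (xe : ℝ → ℝ)
    (hxe_mem : ∀ θ, xe θ ∈ Set.Icc 0 xbar)
    (hxe_max : ∀ θ, ∀ x' ∈ Set.Icc 0 xbar, v x' + θ * x' ≤ v (xe θ) + θ * xe θ)
    (u : ℝ → ℝ → ℝ)
    (hu : ∀ x θ, u x θ = v (min x (xe θ)) + θ * min x (xe θ))
    (θstar θbar : ℝ) (hθ : θstar < θbar)
    (F f : ℝ → ℝ) (m M : ℝ) (hm : 0 < m)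
    (hf_cont : ContinuousOn f (Set.Icc θstar θbar))
    (hf_bdd : ∀ θ ∈ Set.Icc θstar θbar, m ≤ f θ ∧ f θ ≤ M)
    (hFθ : ∀ θ ∈ Set.Icc θstar θbar, F θ = ∫ z in θstar..θ, f z)
    (hF1 : F θbar = 1)
    (δ : ℝ)
    (n : ℕ) (hn : 1 ≤ n)
    (θf : ℕ → ℝ)
    (hθf : ∀ i ≤ n, θf i = θbar - (i : ℝ) * (θbar - θstar) / n)
    (x p : ℕ → ℝ)
    (hx_mem : ∀ i, 1 ≤ i → i ≤ n → x i ∈ Set.Icc 0 xbar)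
    (hrec : ∀ i, 1 ≤ i → i < n →
      u (x i) (θf i) - p i = δ * (u (x (i + 1)) (θf i) - p (i + 1)))
    (hpn : p n = u (x n) (θf n))
    (xstep : ℝ → ℝ) (tstep : ℝ → ℕ)
    (hstep : ∀ i, 1 ≤ i → i ≤ n → ∀ θ ∈ Set.Ioc (θf i) (θf (i - 1)),
      xstep θ = x i ∧ tstep θ = i - 1) :
    ∑ i ∈ Finset.Icc 1 n, δ ^ (i - 1) * (F (θf (i - 1)) - F (θf i)) * p i =
      ∫ θ in θstar..θbar,
        δ ^ (tstep θ) *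
          (v (min (xstep θ) (xe θ)) +
            min (xstep θ) (xe θ) * (θ - (1 - F θ) / f θ)) * f θ := by
  have hθ0 : θf 0 = θbar := by simp [hθf 0 n.zero_le]
  have hθn : θf n = θstar := by
    rw [hθf n le_rfl]
    field_simp [show (n : ℝ) ≠ 0 by positivity]
    ring
  set Φ : ℝ → ℝ := fun θ => δ ^ (tstep θ) *
    (v (min (xstep θ) (xe θ)) + min (xstep θ) (xe θ) * (θ - (1 - F θ) / f θ)) * f θ
  have hpiece : ∀ i ∈ Finset.Icc 1 n, IntervalIntegrable Φ volume (θf i) (θf (i - 1)) ∧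
      ∫ θ in θf i..θf (i - 1), Φ θ = δ ^ (i - 1) *
        (u (x i) (θf i) * (1 - F (θf i)) - u (x i) (θf (i - 1)) * (1 - F (θf (i - 1)))) := by
    intro i hi
    obtain ⟨hi1, hin⟩ := Finset.mem_Icc.1 hi
    obtain ⟨hlo, hab, hhi⟩ : θstar ≤ θf i ∧ θf i ≤ θf (i - 1) ∧ θf (i - 1) ≤ θbar := by
      rw [hθf i hin, hθf (i - 1) (by omega)]
      exact uniformGrid_bounds hθ.le hi
    have hIcc : Icc (θf i) (θf (i - 1)) ⊆ Icc θstar θbar := Icc_subset_Icc hlo hhi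
    exact integral_step_virtualSurplus_eq hconc.concaveOn hxe_mem hxe_max (hx_mem i hi1 hin)
      (hu (x i)) hab ((continuousOn_of_eqOn_primitive hf_cont hFθ).mono hIcc)
      (fun θ hθ => hasDerivAt_of_eqOn_primitive hf_cont hFθ (Ioo_subset_Ioo hlo hhi hθ))
      ((hf_cont.mono hIcc).intervalIntegrable_of_Icc hab)
      (fun θ hθ => (hm.trans_le (hf_bdd θ (hIcc (Ioo_subset_Icc_self hθ))).1).ne')
      (fun θ hθ => hstep i hi1 hin θ (Ioo_subset_Ioc_self hθ))
  rw [← hθ0, ← hθn, ← sum_integral_adjacent_intervals_Icc_pred fun i hi => (hpiece i hi).1,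
    Finset.sum_congr rfl fun i hi => (hpiece i hi).2]
  exact sum_revenue_eq_sum_boundary (Fs := fun i => F (θf i)) (by rw [hθ0, hF1]) hrec hpn

/-- discrete revenue = discounted virtual surplus: with cutoff
types `θ_i = θ̄ − i(θ̄ − θ*)/n` partitioning `[θ*, θ̄]`, allocations `x_i`,
prices defined recursively by the cutoff indifference conditions
`u(x_i, θ_i) − p_i = δ·(u(x_{i+1}, θ_i) − p_{i+1})` with the boundary IR
binding (`p_n = u(x_n, θ_n)`, the lowest type `θ_n = θ*` getting full surplus
minus a zero information rent), the seller's revenue equals the expected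
discounted virtual surplus. -/
theorem discrete_revenue_identity
    (xbar : ℝ) (hxbar : 0 < xbar)
    (v : ℝ → ℝ)
    (hconc : StrictConcaveOn ℝ (Set.Icc 0 xbar) v)
    (hv0 : v 0 = 0)
    (xe : ℝ → ℝ)
    (hxe_mem : ∀ θ, xe θ ∈ Set.Icc 0 xbar)
    (hxe_max : ∀ θ, ∀ x' ∈ Set.Icc 0 xbar, v x' + θ * x' ≤ v (xe θ) + θ * xe θ)
    (u : ℝ → ℝ → ℝ)
    (hu : ∀ x θ, u x θ = v (min x (xe θ)) + θ * min x (xe θ))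
    (θstar θbar : ℝ) (hθ : θstar < θbar)
    (F f : ℝ → ℝ) (m M : ℝ) (hm : 0 < m)
    (hf_cont : ContinuousOn f (Set.Icc θstar θbar))
    (hf_bdd : ∀ θ ∈ Set.Icc θstar θbar, m ≤ f θ ∧ f θ ≤ M)
    (hFθ : ∀ θ ∈ Set.Icc θstar θbar, F θ = ∫ z in θstar..θ, f z)
    (hF1 : F θbar = 1)
    (δ : ℝ) (hδ : δ ∈ Set.Ico (0 : ℝ) 1)
    (n : ℕ) (hn : 1 ≤ n)
    (θf : ℕ → ℝ)
    (hθf : ∀ i ≤ n, θf i = θbar - (i : ℝ) * (θbar - θstar) / n)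
    (x p : ℕ → ℝ)
    (hx_mem : ∀ i, 1 ≤ i → i ≤ n → x i ∈ Set.Icc 0 xbar)
    (hrec : ∀ i, 1 ≤ i → i < n →
      u (x i) (θf i) - p i = δ * (u (x (i + 1)) (θf i) - p (i + 1)))
    (hpn : p n = u (x n) (θf n))
    (xstep : ℝ → ℝ) (tstep : ℝ → ℕ)
    (hstep : ∀ i, 1 ≤ i → i ≤ n → ∀ θ ∈ Set.Ioc (θf i) (θf (i - 1)),
      xstep θ = x i ∧ tstep θ = i - 1) :
    ∑ i ∈ Finset.Icc 1 n, δ ^ (i - 1) * (F (θf (i - 1)) - F (θf i)) * p i =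
      ∫ θ in θstar..θbar,
        δ ^ (tstep θ) *
          (v (min (xstep θ) (xe θ)) +
            min (xstep θ) (xe θ) * (θ - (1 - F θ) / f θ)) * f θ :=
  discrete_revenue_identity_general xbar v hconc xe hxe_mem hxe_max u hu θstar θbar hθ F f m M hm
    hf_cont hf_bdd hFθ hF1 δ n hn θf hθf x p hx_mem hrec hpn xstep tstep hstep
end
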